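/- arXiv:2501.11281 — 6 statements merged into one kernel-verified Lean document; each statement's English description precedes it below -/
import Mathlib

section
/- Let G be a connected 3-sparse graph with maximum degree Δ and set k = Δ. If G has an edge uv with edge degree at most k, then G is k-edge-degenerate. -/
/-!
Suppose a subgraph `H ≤ G` had only edges of edge degree above `k = Δ(G)`. For an edge `xy` of
`H` with `d_G(x) ≤ 3`, the bound `d_G(y) ≤ k < d_H(x) + d_H(y) - 2` forces `d_H(x) = 3 = d_G(x)`
and then `d_H(y) = d_G(y)`: `H` keeps every `G`-edge at both ends of each of its edges. So the
vertices covered by `H` form a set closed under `G`-adjacency, which by connectivity contains `u`;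
hence `uv ∈ H` with the same edge degree as in `G`, at most `k`.
-/

namespace SimpleGraph

variable {V : Type*} {G H : SimpleGraph V}

theorem Reachable.mem_of_adj_closed {s : Set V} {a b : V} (hab : G.Reachable a b)
    (hs : ∀ x y, G.Adj x y → x ∈ s → y ∈ s) (ha : a ∈ s) : b ∈ s := by
  rw [reachable_iff_reflTransGen] at hab
  induction hab with
  | refl => exact ha
  | tail _ hxy ih => exact hs _ _ hxy ih

theorem adj_of_le_of_degree_eq {x z : V} [Fintype (G.neighborSet x)]
    [Fintype (H.neighborSet x)] (hle : H ≤ G) (hdeg : H.degree x = G.degree x)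
    (hxz : G.Adj x z) : H.Adj x z := by
  have hsub : H.neighborFinset x ⊆ G.neighborFinset x := fun y hy => by
    simpa using hle (by simpa using hy)
  have heq := Finset.eq_of_subset_of_card_le hsub hdeg.ge
  rw [← mem_neighborFinset, heq, mem_neighborFinset]
  exact hxz

theorem degree_eq_of_edgeDegree_gt {x y : V} {k : ℕ} [Fintype (G.neighborSet x)]
    [Fintype (G.neighborSet y)] [Fintype (H.neighborSet x)] [Fintype (H.neighborSet y)]
    (hle : H ≤ G) (hsparse : G.degree x ≤ 3 ∨ G.degree y ≤ 3) (hx : G.degree x ≤ k)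
    (hy : G.degree y ≤ k) (hgt : k < H.degree x + H.degree y - 2) :
    H.degree x = G.degree x ∧ H.degree y = G.degree y := by
  have hHx : H.degree x ≤ G.degree x := degree_le_of_le hle
  have hHy : H.degree y ≤ G.degree y := degree_le_of_le hle
  omega

end SimpleGraph

theorem three_sparse_edge_degenerate_general {V : Type*} [Fintype V]
    (G : SimpleGraph V) [DecidableRel G.Adj]
    (hconn : G.Connected)
    (hsparse : ∀ u v : V, G.Adj u v → G.degree u ≤ 3 ∨ G.degree v ≤ 3)
    (k : ℕ) (hk : k = G.maxDegree)
    (u v : V) (huv : G.Adj u v) (hdeg : G.degree u + G.degree v - 2 ≤ k) :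
    ∀ (H : SimpleGraph V) [DecidableRel H.Adj], H ≤ G →
      (∃ a b : V, H.Adj a b) →
      ∃ a b : V, H.Adj a b ∧ H.degree a + H.degree b - 2 ≤ k := by
  intro H _ hle ⟨a, b, hab⟩
  by_contra! hno
  have hmax : ∀ x, G.degree x ≤ k := hk ▸ G.degree_le_maxDegree
  have hfull : ∀ x y, H.Adj x y → H.degree x = G.degree x ∧ H.degree y = G.degree y :=
    fun x y hxy => SimpleGraph.degree_eq_of_edgeDegree_gt hle (hsparse x y (hle hxy))
      (hmax x) (hmax y) (hno x y hxy)
  have hclosed : ∀ x z, G.Adj x z → x ∈ H.support → z ∈ H.support := by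
    rintro x z hxz ⟨y, hxy⟩
    exact (SimpleGraph.adj_of_le_of_degree_eq hle (hfull x y hxy).1 hxz).right_mem_support
  obtain ⟨y, huy⟩ := (hconn a u).mem_of_adj_closed hclosed hab.left_mem_support
  have hHuv : H.Adj u v := SimpleGraph.adj_of_le_of_degree_eq hle (hfull u y huy).1 huv
  obtain ⟨hu, hv⟩ := hfull u v hHuv
  have hgt := hno u v hHuv
  omega

/-- Let `G` be a connected 3-sparse graph with maximum degree `Δ` and set `k = Δ`.
If `G` has an edge `uv` with edge degree (`d(u) + d(v) - 2`) at most `k`, then `G` is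
`k`-edge-degenerate: every subgraph with at least one edge has an edge of
edge degree at most `k`. -/
theorem three_sparse_edge_degenerate {V : Type*} [Fintype V] [DecidableEq V]
    (G : SimpleGraph V) [DecidableRel G.Adj]
    (hconn : G.Connected)
    (hsparse : ∀ u v : V, G.Adj u v → G.degree u ≤ 3 ∨ G.degree v ≤ 3)
    (k : ℕ) (hk : k = G.maxDegree)
    (u v : V) (huv : G.Adj u v) (hdeg : G.degree u + G.degree v - 2 ≤ k) :
    ∀ (H : SimpleGraph V) [DecidableRel H.Adj], H ≤ G →
      (∃ a b : V, H.Adj a b) →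
      ∃ a b : V, H.Adj a b ∧ H.degree a + H.degree b - 2 ≤ k :=
  three_sparse_edge_degenerate_general G hconn hsparse k hk u v huv hdeg
end

section
/- Let f be a partial proper acyclic edge coloring of a graph G and let e = xy be an uncolored edge. A candidate color β for e (i.e., a color not appearing on any edge incident to x or y) fails to be valid for e if and only if there exists a color α appearing on both an edge at x and an edge at y such that there is an (α,β,xy)-critical path: a maximal bichromatic path in colors α,β starting at x with an edge colored α and ending at y with an edge colored α. -/
/-- A partial edge coloring (edges colored `none` are uncolored) is proper if distinct
colored edges sharing a vertex get distinct colors. -/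
def ProperP {V : Type*} (G : SimpleGraph V) (c : Sym2 V → Option ℕ) : Prop :=
  ∀ ⦃e₁⦄, e₁ ∈ G.edgeSet → ∀ ⦃e₂⦄, e₂ ∈ G.edgeSet → e₁ ≠ e₂ →
    (∃ x, x ∈ e₁ ∧ x ∈ e₂) → ∀ a : ℕ, c e₁ = some a → c e₂ ≠ some a

/-- A partial edge coloring is acyclic if it is proper and no cycle has all of its
edges colored with exactly two colors. -/
def AcyclicP {V : Type*} (G : SimpleGraph V) (c : Sym2 V → Option ℕ) : Prop :=
  ProperP G c ∧ ∀ (v : V) (w : G.Walk v v), w.IsCycle →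
    ¬ ∃ a b : ℕ, a ≠ b ∧ ∀ e ∈ w.edges, c e = some a ∨ c e = some b

/-- `Fcol G c x y` is `F_{xy}`: the set of colors on edges incident to `y`
other than the edge `xy`. -/
def Fcol {V : Type*} (G : SimpleGraph V) (c : Sym2 V → Option ℕ) (x y : V) : Set ℕ :=
  {a | ∃ z, G.Adj y z ∧ z ≠ x ∧ c s(y, z) = some a}

/-- `β` is a candidate color for the edge `xy`: it appears on no edge incident
to `x` or to `y`. -/
def Candidate {V : Type*} (G : SimpleGraph V) (c : Sym2 V → Option ℕ)
    (x y : V) (β : ℕ) : Prop :=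
  (∀ z, G.Adj x z → c s(x, z) ≠ some β) ∧ (∀ z, G.Adj y z → c s(y, z) ≠ some β)

/-- An `(α,β,xy)`-critical path: a maximal bichromatic path in colors `α, β`
from `x` to `y`, starting at `x` with an edge colored `α` and ending at `y`
with an edge colored `α`. -/
def IsCriticalPath {V : Type*} (G : SimpleGraph V) (c : Sym2 V → Option ℕ) (α β : ℕ)
    {x y : V} (w : G.Walk x y) : Prop :=
  w.IsPath ∧ w.edges ≠ [] ∧
  (∀ e ∈ w.edges, c e = some α ∨ c e = some β) ∧
  (∀ e ∈ G.edgeSet, x ∈ e → (c e = some α ∨ c e = some β) → e ∈ w.edges) ∧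
  (∀ e ∈ G.edgeSet, y ∈ e → (c e = some α ∨ c e = some β) → e ∈ w.edges) ∧
  (w.edges.map c).head? = some (some α) ∧ (w.edges.map c).getLast? = some (some α)


open SimpleGraph

lemma edge_at {V : Type*} (G : SimpleGraph V) {e : Sym2 V} {x : V}
    (he : e ∈ G.edgeSet) (hx : x ∈ e) : ∃ z, G.Adj x z ∧ e = s(x, z) := by
  induction e using Sym2.ind with
  | _ u v =>
    rw [Sym2.mem_iff] at hx
    rw [SimpleGraph.mem_edgeSet] at he
    rcases hx with rfl | rfl
    · exact ⟨v, he, rfl⟩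
    · exact ⟨u, he.symm, Sym2.eq_swap⟩

lemma exists_path_of_cycle {V : Type*} {G : SimpleGraph V} {x y : V} (hne : x ≠ y)
    (C : G.Walk x x) (hC : C.IsCycle) (he : s(x, y) ∈ C.edges) :
    ∃ p : G.Walk x y, p.IsPath ∧ s(x, y) ∉ p.edges ∧ ∀ e ∈ p.edges, e ∈ C.edges := by
  cases C with
  | nil => simp at he
  | @cons _ u _ h q =>
    rw [Walk.cons_isCycle_iff] at hC
    rw [Walk.edges_cons, List.mem_cons] at he
    rcases he with he | he
    · have huy : y = u := Sym2.congr_right.mp he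
      subst huy
      refine ⟨q.reverse, hC.1.reverse, ?_, ?_⟩
      · rw [Walk.edges_reverse, List.mem_reverse]; exact hC.2
      · intro e hee
        rw [Walk.edges_reverse, List.mem_reverse] at hee
        rw [Walk.edges_cons]; exact List.mem_cons_of_mem _ hee
    · have hq : q.reverse.IsPath := hC.1.reverse
      have he' : s(x, y) ∈ q.reverse.edges := by
        rw [Walk.edges_reverse, List.mem_reverse]; exact he
      have hnn : ¬ q.reverse.Nil := by
        intro hn
        rw [Walk.nil_iff_length_eq] at hn
        have h2 : q.reverse.edges = [] :=
          List.length_eq_zero_iff.mp (by rw [Walk.length_edges, hn])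
        rw [h2] at he'; simp at he'
      obtain ⟨z, hz, r, hr⟩ := Walk.not_nil_iff.mp hnn
      rw [hr] at he' hq
      rw [Walk.edges_cons, List.mem_cons] at he'
      rw [Walk.cons_isPath_iff] at hq
      have hz_y : z = y := by
        rcases he' with h1 | h1
        · exact (Sym2.congr_right.mp h1).symm
        · exact absurd (Walk.fst_mem_support_of_mem_edges r h1) hq.2
      subst hz_y
      have hu_y : u ≠ z := by rintro rfl; exact hC.2 he
      refine ⟨Walk.cons h r.reverse, ?_, ?_, ?_⟩
      · rw [Walk.cons_isPath_iff]
        refine ⟨hq.1.reverse, ?_⟩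
        rw [Walk.support_reverse, List.mem_reverse]; exact hq.2
      · rw [Walk.edges_cons, List.mem_cons]
        push_neg
        constructor
        · intro h1; exact hu_y (Sym2.congr_right.mp h1).symm
        · intro h1
          rw [Walk.edges_reverse, List.mem_reverse] at h1
          exact hq.2 (Walk.fst_mem_support_of_mem_edges r h1)
      · intro e hee
        rw [Walk.edges_cons, List.mem_cons] at hee
        rw [Walk.edges_cons]
        rcases hee with rfl | hee
        · exact List.mem_cons_self
        · rw [Walk.edges_reverse, List.mem_reverse] at hee
          have : e ∈ q.reverse.edges := by
            rw [hr, Walk.edges_cons]; exact List.mem_cons_of_mem _ hee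
          rw [Walk.edges_reverse, List.mem_reverse] at this
          exact List.mem_cons_of_mem _ this

/-- A candidate color `β` for an uncolored edge `xy` fails to be valid (coloring `xy`
with `β` destroys acyclicity) if and only if there is a color
`α ∈ F_{xy} ∩ F_{yx}` with an `(α,β,xy)`-critical path. -/
theorem candidate_invalid_iff_critical_path {V : Type*} [DecidableEq V]
    (G : SimpleGraph V) (c : Sym2 V → Option ℕ) (hac : AcyclicP G c)
    (x y : V) (hxy : G.Adj x y) (huncolored : c s(x, y) = none)
    (β : ℕ) (hcand : Candidate G c x y β) :
    ¬ AcyclicP G (Function.update c s(x, y) (some β)) ↔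
      ∃ α, α ∈ Fcol G c x y ∧ α ∈ Fcol G c y x ∧
        ∃ w : G.Walk x y, IsCriticalPath G c α β w := by
  classical
  set c' := Function.update c s(x, y) (some β) with hc'def
  have hxyne : x ≠ y := hxy.ne
  have hcup : c' s(x, y) = some β := Function.update_self _ _ _
  have hother : ∀ e : Sym2 V, e ≠ s(x, y) → c' e = c e :=
    fun e he => Function.update_of_ne he _ _
  constructor
  · intro hnac
    have hprop : ProperP G c' := by
      intro e₁ h1 e₂ h2 hne hsh a ha hb
      by_cases k1 : e₁ = s(x, y)
      · subst k1
        rw [hcup] at ha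
        obtain rfl : β = a := Option.some.inj ha
        rw [hother e₂ (fun h => hne h.symm)] at hb
        obtain ⟨v, hv1, hv2⟩ := hsh
        rcases Sym2.mem_iff.mp hv1 with rfl | rfl
        · obtain ⟨z, hz, rfl⟩ := edge_at G h2 hv2
          exact hcand.1 z hz hb
        · obtain ⟨z, hz, rfl⟩ := edge_at G h2 hv2
          exact hcand.2 z hz hb
      · by_cases k2 : e₂ = s(x, y)
        · subst k2
          rw [hcup] at hb
          obtain rfl : β = a := Option.some.inj hb
          rw [hother e₁ k1] at ha
          obtain ⟨v, hv1, hv2⟩ := hsh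
          rcases Sym2.mem_iff.mp hv2 with rfl | rfl
          · obtain ⟨z, hz, rfl⟩ := edge_at G h1 hv1
            exact hcand.1 z hz ha
          · obtain ⟨z, hz, rfl⟩ := edge_at G h1 hv1
            exact hcand.2 z hz ha
        · rw [hother e₁ k1] at ha
          rw [hother e₂ k2] at hb
          exact hac.1 h1 h2 hne hsh a ha hb
    have hbad : ¬ ∀ (v : V) (w : G.Walk v v), w.IsCycle →
        ¬ ∃ a b : ℕ, a ≠ b ∧ ∀ e ∈ w.edges, c' e = some a ∨ c' e = some b :=
      fun h => hnac ⟨hprop, h⟩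
    push_neg at hbad
    obtain ⟨v, w, hcyc, a, b, hab, hcol⟩ := hbad
    have hmem : s(x, y) ∈ w.edges := by
      by_contra hnm
      exact hac.2 v w hcyc ⟨a, b, hab, fun e he => by
        rw [← hother e (fun h => hnm (h ▸ he))]; exact hcol e he⟩
    have hβ : some β = some a ∨ some β = some b := by
      rw [← hcup]; exact hcol _ hmem
    set α := if a = β then b else a with hα
    have hαβ : α ≠ β := by
      rw [hα]
      by_cases haβ : a = β
      · simp only [haβ, if_pos rfl]
        intro hbβ; exact hab (haβ.trans hbβ.symm)
      · simp only [if_neg haβ]; exact haβ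
    have hcol' : ∀ e ∈ w.edges, c' e = some α ∨ c' e = some β := by
      intro e he
      have hbβ : a ≠ β → b = β := by
        intro haβ
        rcases hβ with h | h
        · exact absurd (Option.some.inj h).symm haβ
        · exact (Option.some.inj h).symm
      rcases hcol e he with h | h
      · by_cases haβ : a = β
        · right; rw [h, haβ]
        · left; rw [h, hα, if_neg haβ]
      · by_cases haβ : a = β
        · left; rw [h, hα, if_pos haβ]
        · right; rw [h, hbβ haβ]
    have hx_supp : x ∈ w.support := Walk.fst_mem_support_of_mem_edges w hmem
    set C := w.rotate x hx_supp with hCdef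
    have hCcyc : C.IsCycle := hcyc.rotate hx_supp
    have hCedges : ∀ e, e ∈ C.edges ↔ e ∈ w.edges :=
      fun e => (Walk.rotate_edges w x hx_supp).perm.mem_iff
    obtain ⟨p, hp, hpne', hpsub⟩ := exists_path_of_cycle hxyne C hCcyc ((hCedges _).mpr hmem)
    have hpcol : ∀ e ∈ p.edges, c e = some α ∨ c e = some β := by
      intro e he
      rw [← hother e (fun h => hpne' (h ▸ he))]
      exact hcol' e ((hCedges e).mp (hpsub e he))
    have hpedges : p.edges ≠ [] := by
      intro h
      apply hxyne
      exact Walk.eq_of_length_eq_zero (by rw [← Walk.length_edges, h]; rfl)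
    have hpnn : ¬ p.Nil := by
      intro h
      rw [Walk.nil_iff_length_eq] at h
      exact hpedges (List.length_eq_zero_iff.mp (by rw [Walk.length_edges, h]))
    obtain ⟨z₁, hz₁, p₁, hp₁⟩ := Walk.not_nil_iff.mp hpnn
    have hprnn : ¬ p.reverse.Nil := by
      intro h
      rw [Walk.nil_iff_length_eq, Walk.length_reverse] at h
      exact hpedges (List.length_eq_zero_iff.mp (by rw [Walk.length_edges, h]))
    obtain ⟨z₂, hz₂, p₂, hp₂⟩ := Walk.not_nil_iff.mp hprnn
    have hfe : s(x, z₁) ∈ p.edges := by rw [hp₁]; simp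
    have hle : s(y, z₂) ∈ p.edges := by
      have h0 : s(y, z₂) ∈ p.reverse.edges := by rw [hp₂]; simp
      rwa [Walk.edges_reverse, List.mem_reverse] at h0
    have hc1 : c s(x, z₁) = some α := (hpcol _ hfe).resolve_right (hcand.1 z₁ hz₁)
    have hc2 : c s(y, z₂) = some α := (hpcol _ hle).resolve_right (hcand.2 z₂ hz₂)
    refine ⟨α, ⟨z₂, hz₂, ?_, hc2⟩, ⟨z₁, hz₁, ?_, hc1⟩, p, hp, hpedges, hpcol, ?_, ?_, ?_, ?_⟩
    · rintro rfl
      exact hpne' (by rwa [Sym2.eq_swap] at hle)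
    · rintro rfl
      exact hpne' hfe
    · intro e heG hxe hce
      obtain ⟨z, hz, rfl⟩ := edge_at G heG hxe
      rcases hce with hce | hce
      · by_cases heq : s(x, z) = s(x, z₁)
        · rw [heq]; exact hfe
        · exact absurd hc1 (hac.1 heG hz₁ heq ⟨x, by simp, by simp⟩ α hce)
      · exact absurd hce (hcand.1 z hz)
    · intro e heG hye hce
      obtain ⟨z, hz, rfl⟩ := edge_at G heG hye
      rcases hce with hce | hce
      · by_cases heq : s(y, z) = s(y, z₂)
        · rw [heq]; exact hle
        · exact absurd hc2 (hac.1 heG hz₂ heq ⟨y, by simp, by simp⟩ α hce)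
      · exact absurd hce (hcand.2 z hz)
    · rw [hp₁]; simp [hc1]
    · have h0 : (p.edges.map c).getLast? = ((p.edges.map c).reverse).head? :=
        List.head?_reverse.symm
      rw [h0, ← List.map_reverse, ← Walk.edges_reverse, hp₂]
      simp [hc2]
  · rintro ⟨α, ⟨z, hzadj, hzx, hzc⟩, -, w, hw, hwne, hwcol, -, -, -, -⟩
    intro hA
    have hαβ : α ≠ β := fun h => hcand.2 z hzadj (h ▸ hzc)
    have hnotin : s(x, y) ∉ w.edges := by
      intro h
      rcases hwcol _ h with h' | h' <;> rw [huncolored] at h' <;> cases h'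
    have hcyc : (Walk.cons hxy w.reverse).IsCycle := by
      rw [Walk.cons_isCycle_iff]
      exact ⟨hw.reverse, by rwa [Walk.edges_reverse, List.mem_reverse]⟩
    apply hA.2 x _ hcyc
    refine ⟨α, β, hαβ, ?_⟩
    intro e he
    rw [Walk.edges_cons, List.mem_cons] at he
    rcases he with rfl | he
    · right; exact hcup
    · rw [Walk.edges_reverse, List.mem_reverse] at he
      rw [hother e (fun h => hnotin (h ▸ he))]
      exact hwcol e he
end

section
/- Deleting any edge from a 3-sparse graph G with maximum degree Δ ≥ 3 yields a 3-sparse graph G' containing an edge xy with d_{G'}(x) + d_{G'}(y) < Δ + 3, provided G' has at least one edge adjacent to the deleted edge. -/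
namespace SimpleGraph

variable {V : Type*} {G H : SimpleGraph V}

def IsSparse (G : SimpleGraph V) [G.LocallyFinite] (k : ℕ) : Prop :=
  ∀ ⦃a b : V⦄, G.Adj a b → G.degree a ≤ k ∨ G.degree b ≤ k

theorem IsSparse.mono [G.LocallyFinite] [H.LocallyFinite] {k : ℕ} (hG : G.IsSparse k)
    (hle : H ≤ G) : H.IsSparse k := fun _ _ hab =>
  (hG (hle hab)).imp (degree_le_of_le hle).trans (degree_le_of_le hle).trans

theorem IsSparse.degree_add_degree_le [Fintype V] [DecidableRel G.Adj] {k : ℕ}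
    (hG : G.IsSparse k) {a b : V} (hab : G.Adj a b) :
    G.degree a + G.degree b ≤ G.maxDegree + k := by
  have ha := G.degree_le_maxDegree a
  have hb := G.degree_le_maxDegree b
  rcases hG hab with h | h <;> omega

theorem degree_lt_of_le_of_adj_of_not_adj {u v : V} [Fintype (G.neighborSet u)]
    [Fintype (H.neighborSet u)] (hle : H ≤ G) (hG : G.Adj u v) (hH : ¬H.Adj u v) :
    H.degree u < G.degree u := by
  simp_rw [← card_neighborFinset_eq_degree]
  refine Finset.card_lt_card ((Finset.ssubset_iff_of_subset fun w hw => ?_).2 ⟨v, ?_, ?_⟩)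
  · simpa using hle ((mem_neighborFinset _ _ _).1 hw)
  · simpa using hG
  · simpa using hH

/-- Losing the edge `xy` strictly lowers the degree of `x`, which pushes the bound of
`IsSparse.degree_add_degree_le` below `Δ(G) + k` on every remaining edge at `x`. -/
theorem IsSparse.degree_add_degree_lt_of_le [Fintype V] [DecidableRel G.Adj]
    [DecidableRel H.Adj] {k : ℕ} (hG : G.IsSparse k) (hle : H ≤ G) {x y w : V}
    (hxy : G.Adj x y) (hnxy : ¬H.Adj x y) (hxw : H.Adj x w) :
    H.degree x + H.degree w < G.maxDegree + k := by
  have hx := degree_lt_of_le_of_adj_of_not_adj hle hxy hnxy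
  have hw : H.degree w ≤ G.degree w := degree_le_of_le hle
  have := hG.degree_add_degree_le (hle hxw)
  omega

end SimpleGraph

theorem delete_edge_three_sparse_general {V : Type*} [Fintype V]
    (G : SimpleGraph V) [DecidableRel G.Adj]
    (hsparse : ∀ u v : V, G.Adj u v → G.degree u ≤ 3 ∨ G.degree v ≤ 3)
    (u v : V) (huv : G.Adj u v)
    (G' : SimpleGraph V) [DecidableRel G'.Adj]
    (hG' : G' = G.deleteEdges {s(u, v)}) :
    (∀ a b : V, G'.Adj a b → G'.degree a ≤ 3 ∨ G'.degree b ≤ 3) ∧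
    ((∃ w : V, G'.Adj u w ∨ G'.Adj v w) →
      ∃ x y : V, G'.Adj x y ∧ G'.degree x + G'.degree y < G.maxDegree + 3) := by
  have hG : G.IsSparse 3 := hsparse
  have hle : G' ≤ G := hG' ▸ G.deleteEdges_le _
  have hnuv : ¬G'.Adj u v := by simp [hG']
  refine ⟨fun a b hab => hG.mono hle hab, ?_⟩
  rintro ⟨w, hw | hw⟩
  · exact ⟨u, w, hw, hG.degree_add_degree_lt_of_le hle huv hnuv hw⟩
  · exact ⟨v, w, hw, hG.degree_add_degree_lt_of_le hle huv.symm (hnuv ∘ G'.adj_symm) hw⟩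

/-- Deleting any edge `uv` from a 3-sparse graph `G` with maximum degree `Δ ≥ 3`
yields a 3-sparse graph `G'`, and, provided `G'` has at least one edge sharing an
endpoint with the deleted edge, `G'` contains an edge `xy` with
`d_{G'}(x) + d_{G'}(y) < Δ + 3`. -/
theorem delete_edge_three_sparse {V : Type*} [Fintype V] [DecidableEq V]
    (G : SimpleGraph V) [DecidableRel G.Adj]
    (hsparse : ∀ u v : V, G.Adj u v → G.degree u ≤ 3 ∨ G.degree v ≤ 3)
    (hΔ : 3 ≤ G.maxDegree)
    (u v : V) (huv : G.Adj u v)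
    (G' : SimpleGraph V) [DecidableRel G'.Adj]
    (hG' : G' = G.deleteEdges {s(u, v)}) :
    (∀ a b : V, G'.Adj a b → G'.degree a ≤ 3 ∨ G'.degree b ≤ 3) ∧
    ((∃ w : V, G'.Adj u w ∨ G'.Adj v w) →
      ∃ x y : V, G'.Adj x y ∧ G'.degree x + G'.degree y < G.maxDegree + 3) :=
  delete_edge_three_sparse_general G hsparse u v huv G' hG'
end

section
/- The complete bipartite graph K_{3,3} has acyclic chromatic index 5; that is, K_{3,3} admits an acyclic edge coloring with 5 colors but no acyclic edge coloring with 4 colors. -/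
open SimpleGraph Walk Sum

/-- A proper edge coloring: distinct edges sharing a vertex get distinct colors. -/
def ProperEC {V : Type*} (G : SimpleGraph V) (c : Sym2 V → ℕ) : Prop :=
  ∀ ⦃e₁⦄, e₁ ∈ G.edgeSet → ∀ ⦃e₂⦄, e₂ ∈ G.edgeSet → e₁ ≠ e₂ →
    (∃ x, x ∈ e₁ ∧ x ∈ e₂) → c e₁ ≠ c e₂

/-- An acyclic edge coloring: proper and no cycle is bichromatic (its edges
colored with exactly two colors). -/
def AcyclicEC {V : Type*} (G : SimpleGraph V) (c : Sym2 V → ℕ) : Prop :=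
  ProperEC G c ∧ ∀ (v : V) (w : G.Walk v v), w.IsCycle →
    ¬ ∃ a b : ℕ, a ≠ b ∧ ∀ e ∈ w.edges, c e = a ∨ c e = b

/-- `G` has an acyclic edge coloring using at most `n` colors. -/
def HasAEC {V : Type*} (G : SimpleGraph V) (n : ℕ) : Prop :=
  ∃ c : Sym2 V → ℕ, AcyclicEC G c ∧ ∀ e ∈ G.edgeSet, c e < n

abbrev V3 := Fin 3 ⊕ Fin 3
abbrev G3 : SimpleGraph V3 := completeBipartiteGraph (Fin 3) (Fin 3)

instance : DecidableRel G3.Adj := fun a b => by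
  simp only [completeBipartiteGraph]; infer_instance

def E3 (i j : Fin 3) : Sym2 V3 := s(Sum.inl i, Sum.inr j)

lemma adjLR (i j : Fin 3) : G3.Adj (Sum.inl i) (Sum.inr j) := by
  simp [completeBipartiteGraph]

lemma adjRL (i j : Fin 3) : G3.Adj (Sum.inr j) (Sum.inl i) := by
  simp [completeBipartiteGraph]

lemma mem_edge (i j : Fin 3) : E3 i j ∈ G3.edgeSet := adjLR i j

lemma flipE (i j : Fin 3) : (s(Sum.inr j, Sum.inl i) : Sym2 V3) = E3 i j := Sym2.eq_swap

lemma eqE (i j : Fin 3) : (s(Sum.inl i, Sum.inr j) : Sym2 V3) = E3 i j := rfl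

lemma E3_ne {i j i' j' : Fin 3} (h : i ≠ i' ∨ j ≠ j') : E3 i j ≠ E3 i' j' := by
  intro hEq
  rw [E3, E3, Sym2.eq_iff] at hEq
  rcases hEq with h' | h' <;> simp [Prod.ext_iff] at h' <;> tauto

lemma pne_row {c : Sym2 V3 → ℕ} (hp : ProperEC G3 c) {i j j' : Fin 3} (h : j ≠ j') :
    c (E3 i j) ≠ c (E3 i j') :=
  hp (mem_edge i j) (mem_edge i j') (E3_ne (Or.inr h)) ⟨Sum.inl i, by simp [E3], by simp [E3]⟩

lemma pne_col {c : Sym2 V3 → ℕ} (hp : ProperEC G3 c) {i i' j : Fin 3} (h : i ≠ i') :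
    c (E3 i j) ≠ c (E3 i' j) :=
  hp (mem_edge i j) (mem_edge i' j) (E3_ne (Or.inl h)) ⟨Sum.inr j, by simp [E3], by simp [E3]⟩

lemma adj_inl {i : Fin 3} {x : V3} (h : G3.Adj (Sum.inl i) x) : ∃ j, x = Sum.inr j := by
  cases x with
  | inl i' => simp [completeBipartiteGraph] at h
  | inr j => exact ⟨j, rfl⟩

lemma adj_inr {j : Fin 3} {x : V3} (h : G3.Adj (Sum.inr j) x) : ∃ i, x = Sum.inl i := by
  cases x with
  | inl i => exact ⟨i, rfl⟩
  | inr j' => simp [completeBipartiteGraph] at h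

def Pat4 (c : Sym2 V3 → ℕ) : Prop :=
  ∃ i1 i2 j1 j2 : Fin 3, i1 ≠ i2 ∧ j1 ≠ j2 ∧
    c (E3 i1 j1) = c (E3 i2 j2) ∧ c (E3 i2 j1) = c (E3 i1 j2)

def Pat6 (c : Sym2 V3 → ℕ) : Prop :=
  ∃ i1 i2 i3 j1 j2 j3 : Fin 3, i1 ≠ i2 ∧ i1 ≠ i3 ∧ i2 ≠ i3 ∧ j1 ≠ j2 ∧ j1 ≠ j3 ∧ j2 ≠ j3 ∧
    c (E3 i1 j1) = c (E3 i2 j2) ∧ c (E3 i2 j2) = c (E3 i3 j3) ∧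
    c (E3 i2 j1) = c (E3 i3 j2) ∧ c (E3 i3 j2) = c (E3 i1 j3)

lemma length_le_six {v : V3} {w : G3.Walk v v} (hw : w.IsCycle) : w.length ≤ 6 := by
  have h1 : w.support.tail.Nodup := hw.2
  have h2 : w.support.tail.length ≤ Fintype.card V3 := h1.length_le_card
  have h3 : w.support.length = w.length + 1 := w.length_support
  simp [List.length_tail, h3] at h2
  simpa using h2

lemma alt4 {x1 x2 x3 x4 a b : ℕ} (h1 : x1 = a ∨ x1 = b) (h2 : x2 = a ∨ x2 = b)
    (h3 : x3 = a ∨ x3 = b) (h4 : x4 = a ∨ x4 = b)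
    (d1 : x1 ≠ x2) (d2 : x2 ≠ x3) (d3 : x3 ≠ x4) : x1 = x3 ∧ x2 = x4 := by
  rcases h1 with h1 | h1 <;> rcases h2 with h2 | h2 <;> rcases h3 with h3 | h3 <;>
    rcases h4 with h4 | h4 <;> omega

lemma alt6 {x1 x2 x3 x4 x5 x6 a b : ℕ} (h1 : x1 = a ∨ x1 = b) (h2 : x2 = a ∨ x2 = b)
    (h3 : x3 = a ∨ x3 = b) (h4 : x4 = a ∨ x4 = b) (h5 : x5 = a ∨ x5 = b)
    (h6 : x6 = a ∨ x6 = b) (d1 : x1 ≠ x2) (d2 : x2 ≠ x3) (d3 : x3 ≠ x4) (d4 : x4 ≠ x5)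
    (d5 : x5 ≠ x6) : x1 = x3 ∧ x3 = x5 ∧ x2 = x4 ∧ x4 = x6 := by
  rcases h1 with h1 | h1 <;> rcases h2 with h2 | h2 <;> rcases h3 with h3 | h3 <;>
    rcases h4 with h4 | h4 <;> rcases h5 with h5 | h5 <;> rcases h6 with h6 | h6 <;> omega

lemma classify {c : Sym2 V3 → ℕ} (hp : ProperEC G3 c) :
    ∀ (v : V3) (w : G3.Walk v v), w.IsCycle →
      (∃ a b : ℕ, a ≠ b ∧ ∀ e ∈ w.edges, c e = a ∨ c e = b) → Pat4 c ∨ Pat6 c := by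
  intro v w hw hbi
  have hlen := length_le_six hw
  have h3 := hw.three_le_length
  rcases v with i1 | j1
  · cases w with
    | nil => simp at h3
    | cons h1 w =>
      obtain ⟨j1, rfl⟩ := adj_inl h1
      cases w with
      | cons h2 w =>
        obtain ⟨i2, rfl⟩ := adj_inr h2
        cases w with
        | nil => simp [Walk.length_cons] at h3
        | cons h3' w =>
          obtain ⟨j2, rfl⟩ := adj_inl h3'
          cases w with
          | cons h4 w =>
            obtain ⟨i3, rfl⟩ := adj_inr h4
            cases w with
            | nil =>
              rw [Walk.isCycle_def] at hw
              obtain ⟨-, -, hnd⟩ := hw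
              simp only [Walk.support_cons, Walk.support_nil, List.tail_cons, List.nodup_cons] at hnd
              obtain ⟨a, b, hab, hcov⟩ := hbi
              simp only [Walk.edges_cons, Walk.edges_nil, List.mem_cons, List.not_mem_nil,
                or_false, forall_eq_or_imp, forall_eq, eqE, flipE] at hcov
              simp only [List.mem_cons, List.mem_singleton, List.not_mem_nil] at hnd
              have hj : j1 ≠ j2 := by simp_all
              have hi : i1 ≠ i2 := by rintro rfl; simp_all
              have d1 : c (E3 i1 j1) ≠ c (E3 i2 j1) := pne_col hp hi
              have d2 : c (E3 i2 j1) ≠ c (E3 i2 j2) := pne_row hp hj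
              have d3 : c (E3 i2 j2) ≠ c (E3 i1 j2) := pne_col hp hi.symm
              have d4 : c (E3 i1 j2) ≠ c (E3 i1 j1) := pne_row hp hj.symm
              obtain ⟨e1, e2, e3, e4⟩ := hcov
              obtain ⟨g1, g2⟩ := alt4 e1 e2 e3 e4 d1 d2 d3
              exact Or.inl ⟨i1, i2, j1, j2, hi, hj, g1, g2⟩
            | cons h5 w =>
              obtain ⟨j3, rfl⟩ := adj_inl h5
              cases w with
              | cons h6 w =>
                obtain ⟨i4, rfl⟩ := adj_inr h6
                cases w with
                | nil =>
                  rw [Walk.isCycle_def] at hw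
                  obtain ⟨-, -, hnd⟩ := hw
                  simp only [Walk.support_cons, Walk.support_nil, List.tail_cons,
                    List.nodup_cons, List.mem_cons, List.mem_singleton, List.not_mem_nil] at hnd
                  obtain ⟨a, b, hab, hcov⟩ := hbi
                  simp only [Walk.edges_cons, Walk.edges_nil, List.mem_cons, List.not_mem_nil,
                    or_false, forall_eq_or_imp, forall_eq, eqE, flipE] at hcov
                  have hj12 : j1 ≠ j2 := by simp_all
                  have hj13 : j1 ≠ j3 := by simp_all
                  have hj23 : j2 ≠ j3 := by simp_all
                  have hi12 : i1 ≠ i2 := by rintro rfl; simp_all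
                  have hi13 : i1 ≠ i3 := by rintro rfl; simp_all
                  have hi23 : i2 ≠ i3 := by rintro rfl; simp_all
                  have d1 : c (E3 i1 j1) ≠ c (E3 i2 j1) := pne_col hp hi12
                  have d2 : c (E3 i2 j1) ≠ c (E3 i2 j2) := pne_row hp hj12
                  have d3 : c (E3 i2 j2) ≠ c (E3 i3 j2) := pne_col hp hi23
                  have d4 : c (E3 i3 j2) ≠ c (E3 i3 j3) := pne_row hp hj23
                  have d5 : c (E3 i3 j3) ≠ c (E3 i1 j3) := pne_col hp hi13.symm
                  have d6 : c (E3 i1 j3) ≠ c (E3 i1 j1) := pne_row hp hj13.symm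
                  obtain ⟨e1, e2, e3, e4, e5, e6⟩ := hcov
                  obtain ⟨g1, g2, g3, g4⟩ := alt6 e1 e2 e3 e4 e5 e6 d1 d2 d3 d4 d5
                  exact Or.inr ⟨i1, i2, i3, j1, j2, j3, hi12, hi13, hi23, hj12, hj13, hj23,
                    g1, g2, g3, g4⟩
                | cons h7 w =>
                  simp [Walk.length_cons] at hlen; omega
  · cases w with
    | nil => simp at h3
    | cons h1 w =>
      obtain ⟨i1, rfl⟩ := adj_inr h1
      cases w with
      | cons h2 w =>
        obtain ⟨j2, rfl⟩ := adj_inl h2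
        cases w with
        | nil => simp [Walk.length_cons] at h3
        | cons h3' w =>
          obtain ⟨i2, rfl⟩ := adj_inr h3'
          cases w with
          | cons h4 w =>
            obtain ⟨j3, rfl⟩ := adj_inl h4
            cases w with
            | nil =>
              rw [Walk.isCycle_def] at hw
              obtain ⟨-, -, hnd⟩ := hw
              simp only [Walk.support_cons, Walk.support_nil, List.tail_cons, List.nodup_cons,
                List.mem_cons, List.mem_singleton, List.not_mem_nil] at hnd
              obtain ⟨a, b, hab, hcov⟩ := hbi
              simp only [Walk.edges_cons, Walk.edges_nil, List.mem_cons, List.not_mem_nil,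
                or_false, forall_eq_or_imp, forall_eq, eqE, flipE] at hcov
              have hi : i1 ≠ i2 := by simp_all
              have hj : j1 ≠ j2 := by rintro rfl; simp_all
              have d1 : c (E3 i1 j1) ≠ c (E3 i1 j2) := pne_row hp hj
              have d2 : c (E3 i1 j2) ≠ c (E3 i2 j2) := pne_col hp hi
              have d3 : c (E3 i2 j2) ≠ c (E3 i2 j1) := pne_row hp hj.symm
              have d4 : c (E3 i2 j1) ≠ c (E3 i1 j1) := pne_col hp hi.symm
              obtain ⟨e1, e2, e3, e4⟩ := hcov
              obtain ⟨g1, g2⟩ := alt4 e1 e2 e3 e4 d1 d2 d3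
              exact Or.inl ⟨i1, i2, j1, j2, hi, hj, g1, g2.symm⟩
            | cons h5 w =>
              obtain ⟨i3, rfl⟩ := adj_inr h5
              cases w with
              | cons h6 w =>
                obtain ⟨j4, rfl⟩ := adj_inl h6
                cases w with
                | nil =>
                  rw [Walk.isCycle_def] at hw
                  obtain ⟨-, -, hnd⟩ := hw
                  simp only [Walk.support_cons, Walk.support_nil, List.tail_cons,
                    List.nodup_cons, List.mem_cons, List.mem_singleton, List.not_mem_nil] at hnd
                  obtain ⟨a, b, hab, hcov⟩ := hbi
                  simp only [Walk.edges_cons, Walk.edges_nil, List.mem_cons, List.not_mem_nil,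
                    or_false, forall_eq_or_imp, forall_eq, eqE, flipE] at hcov
                  have hi12 : i1 ≠ i2 := by simp_all
                  have hi13 : i1 ≠ i3 := by simp_all
                  have hi23 : i2 ≠ i3 := by simp_all
                  have hj12 : j1 ≠ j2 := by rintro rfl; simp_all
                  have hj13 : j1 ≠ j3 := by rintro rfl; simp_all
                  have hj23 : j2 ≠ j3 := by simp_all
                  have d1 : c (E3 i1 j1) ≠ c (E3 i1 j2) := pne_row hp hj12
                  have d2 : c (E3 i1 j2) ≠ c (E3 i2 j2) := pne_col hp hi12
                  have d3 : c (E3 i2 j2) ≠ c (E3 i2 j3) := pne_row hp hj23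
                  have d4 : c (E3 i2 j3) ≠ c (E3 i3 j3) := pne_col hp hi23
                  have d5 : c (E3 i3 j3) ≠ c (E3 i3 j1) := pne_row hp hj13.symm
                  have d6 : c (E3 i3 j1) ≠ c (E3 i1 j1) := pne_col hp hi13.symm
                  obtain ⟨e1, e2, e3, e4, e5, e6⟩ := hcov
                  obtain ⟨g1, g2, g3, g4⟩ := alt6 e1 e2 e3 e4 e5 e6 d1 d2 d3 d4 d5
                  exact Or.inr ⟨i1, i3, i2, j1, j3, j2, hi13, hi12, hi23.symm, hj13, hj12,
                    hj23.symm, g1.trans g2, g2.symm, g4.symm, g3.symm⟩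
                | cons h7 w =>
                  simp [Walk.length_cons] at hlen; omega

def f3 : Fin 3 → Fin 3 → ℕ := ![![0,1,2],![1,2,0],![2,3,4]]

def F3 : V3 → V3 → ℕ
  | Sum.inl i, Sum.inr j => f3 i j
  | Sum.inr j, Sum.inl i => f3 i j
  | _, _ => 0

def c3 : Sym2 V3 → ℕ := Sym2.lift ⟨F3, by rintro (i|i) (j|j) <;> rfl⟩

lemma c3_proper : ProperEC G3 c3 := by
  unfold ProperEC
  decide

lemma f3_pat4 : ¬ Pat4 c3 := by
  unfold Pat4
  decide

lemma f3_pat6 : ¬ Pat6 c3 := by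
  unfold Pat6
  decide

lemma c3_lt : ∀ e ∈ G3.edgeSet, c3 e < 5 := by decide

lemma exist5 : HasAEC G3 5 := by
  refine ⟨c3, ⟨c3_proper, ?_⟩, c3_lt⟩
  intro v w hw hbi
  rcases classify c3_proper v w hw hbi with h | h
  · exact f3_pat4 h
  · exact f3_pat6 h

lemma E3_inj {i j i' j' : Fin 3} : E3 i j = E3 i' j' ↔ i = i' ∧ j = j' := by
  rw [E3, E3, Sym2.eq_iff]
  constructor
  · rintro (h' | h') <;> simp [Prod.ext_iff] at h' <;> tauto
  · rintro ⟨rfl, rfl⟩; exact Or.inl ⟨rfl, rfl⟩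

lemma no_pat4 {c : Sym2 V3 → ℕ} (hc : AcyclicEC G3 c) : ¬ Pat4 c := by
  rintro ⟨i1, i2, j1, j2, hi, hj, g1, g2⟩
  obtain ⟨hp, hac⟩ := hc
  set w : G3.Walk (Sum.inl i1) (Sum.inl i1) :=
    Walk.cons (adjLR i1 j1) (Walk.cons (adjRL i2 j1)
      (Walk.cons (adjLR i2 j2) (Walk.cons (adjRL i1 j2) Walk.nil))) with hwdef
  have hi' : i2 ≠ i1 := hi.symm
  have hj' : j2 ≠ j1 := hj.symm
  have hcyc : w.IsCycle := by
    rw [Walk.isCycle_def]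
    refine ⟨?_, by simp [hwdef], ?_⟩
    · rw [Walk.isTrail_def]
      simp only [hwdef, Walk.edges_cons, Walk.edges_nil, eqE, flipE]
      simp [List.nodup_cons, E3_inj, hi, hi', hj, hj']
    · simp only [hwdef, Walk.support_cons, Walk.support_nil, List.tail_cons]
      simp [List.nodup_cons, Sym2.mk_eq_mk_iff, hi, hi', hj, hj']
  refine hac _ w hcyc ⟨c (E3 i1 j1), c (E3 i2 j1), pne_col hp hi, ?_⟩
  intro e he
  simp only [hwdef, Walk.edges_cons, Walk.edges_nil, eqE, flipE, List.mem_cons,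
    List.not_mem_nil, or_false] at he
  rcases he with rfl | rfl | rfl | rfl
  · exact Or.inl rfl
  · exact Or.inr rfl
  · exact Or.inl g1.symm
  · exact Or.inr g2.symm

lemma no_pat6 {c : Sym2 V3 → ℕ} (hc : AcyclicEC G3 c) : ¬ Pat6 c := by
  rintro ⟨i1, i2, i3, j1, j2, j3, hi12, hi13, hi23, hj12, hj13, hj23, g1, g2, g3, g4⟩
  obtain ⟨hp, hac⟩ := hc
  set w : G3.Walk (Sum.inl i1) (Sum.inl i1) :=
    Walk.cons (adjLR i1 j1) (Walk.cons (adjRL i2 j1)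
      (Walk.cons (adjLR i2 j2) (Walk.cons (adjRL i3 j2)
        (Walk.cons (adjLR i3 j3) (Walk.cons (adjRL i1 j3) Walk.nil))))) with hwdef
  have hi21 : i2 ≠ i1 := hi12.symm
  have hi31 : i3 ≠ i1 := hi13.symm
  have hi32 : i3 ≠ i2 := hi23.symm
  have hj21 : j2 ≠ j1 := hj12.symm
  have hj31 : j3 ≠ j1 := hj13.symm
  have hj32 : j3 ≠ j2 := hj23.symm
  have hcyc : w.IsCycle := by
    rw [Walk.isCycle_def]
    refine ⟨?_, by simp [hwdef], ?_⟩
    · rw [Walk.isTrail_def]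
      simp only [hwdef, Walk.edges_cons, Walk.edges_nil, eqE, flipE]
      simp [List.nodup_cons, E3_inj, hi12, hi13, hi23, hi21, hi31, hi32,
        hj12, hj13, hj23, hj21, hj31, hj32]
    · simp only [hwdef, Walk.support_cons, Walk.support_nil, List.tail_cons]
      simp [List.nodup_cons, hi12, hi13, hi23, hi21, hi31, hi32,
        hj12, hj13, hj23, hj21, hj31, hj32]
  refine hac _ w hcyc ⟨c (E3 i1 j1), c (E3 i2 j1), pne_col hp hi12, ?_⟩
  intro e he
  simp only [hwdef, Walk.edges_cons, Walk.edges_nil, eqE, flipE, List.mem_cons,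
    List.not_mem_nil, or_false] at he
  rcases he with rfl | rfl | rfl | rfl | rfl | rfl
  · exact Or.inl rfl
  · exact Or.inr rfl
  · exact Or.inl g1.symm
  · exact Or.inr g3.symm
  · exact Or.inl (g1.trans g2).symm
  · exact Or.inr (g3.trans g4).symm

def Good (g : Fin 3 → Fin 3 → Fin 4) : Prop :=
  (∀ (i j j' : Fin 3), j ≠ j' → g i j ≠ g i j') ∧
  (∀ (i i' j : Fin 3), i ≠ i' → g i j ≠ g i' j) ∧
  (∀ i1 i2 j1 j2 : Fin 3, i1 ≠ i2 → j1 ≠ j2 →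
    ¬(g i1 j1 = g i2 j2 ∧ g i2 j1 = g i1 j2)) ∧
  (∀ i1 i2 i3 j1 j2 j3 : Fin 3, i1 ≠ i2 → i1 ≠ i3 → i2 ≠ i3 → j1 ≠ j2 → j1 ≠ j3 → j2 ≠ j3 →
    ¬(g i1 j1 = g i2 j2 ∧ g i2 j2 = g i3 j3 ∧ g i2 j1 = g i3 j2 ∧ g i3 j2 = g i1 j3))

set_option synthInstance.maxHeartbeats 2000000 in
set_option synthInstance.maxSize 2000 in
instance (g : Fin 3 → Fin 3 → Fin 4) : Decidable (Good g) := by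
  unfold Good; infer_instance

set_option maxRecDepth 100000 in
set_option maxHeartbeats 4000000 in
lemma no4_matrix : ∀ x0 x1 x2 y0 y1 y2 : Fin 4,
    ¬ Good ![![0, 1, 2], ![x0, x1, x2], ![y0, y1, y2]] := by
  decide

lemma no4_fun (g : Fin 3 → Fin 3 → Fin 4) (h0 : g 0 0 = 0) (h1 : g 0 1 = 1) (h2 : g 0 2 = 2)
    (hg : Good g) : False := by
  have hmg : (![![0, 1, 2], ![g 1 0, g 1 1, g 1 2], ![g 2 0, g 2 1, g 2 2]] :
      Fin 3 → Fin 3 → Fin 4) = g := by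
    funext i j
    fin_cases i <;> fin_cases j <;> simp [h0, h1, h2]
  exact no4_matrix (g 1 0) (g 1 1) (g 1 2) (g 2 0) (g 2 1) (g 2 2) (by rw [hmg]; exact hg)

lemma not_has4 : ¬ HasAEC G3 4 := by
  rintro ⟨c, hc, hlt⟩
  have hp := hc.1
  have hn4 := no_pat4 hc
  have hn6 := no_pat6 hc
  set f : Fin 3 → Fin 3 → ℕ := fun i j => c (E3 i j) with hf
  have hfb : ∀ i j, f i j < 4 := fun i j => hlt _ (mem_edge i j)
  have h01 : f 0 0 ≠ f 0 1 := pne_row hp (by decide)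
  have h02 : f 0 0 ≠ f 0 2 := pne_row hp (by decide)
  have h12 : f 0 1 ≠ f 0 2 := pne_row hp (by decide)
  set π : ℕ → ℕ := fun x =>
    if x = f 0 0 then 0 else if x = f 0 1 then 1 else if x = f 0 2 then 2 else 3 with hπ
  have hπlt : ∀ x, π x < 4 := by
    intro x; simp only [hπ]; split_ifs <;> omega
  have hπinj : ∀ x < 4, ∀ y < 4, π x = π y → x = y := by
    intro x hx y hy h
    have b0 := hfb 0 0; have b1 := hfb 0 1; have b2 := hfb 0 2
    simp only [hπ] at h
    split_ifs at h <;> omega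
  set g : Fin 3 → Fin 3 → Fin 4 := fun i j => ⟨π (f i j), hπlt _⟩ with hg
  have hgiff : ∀ i j i' j', g i j = g i' j' ↔ f i j = f i' j' := by
    intro i j i' j'
    constructor
    · intro h
      exact hπinj _ (hfb i j) _ (hfb i' j') (congrArg Fin.val h)
    · intro h; simp only [hg]; congr 1; rw [h]
  have h00 : g 0 0 = 0 := Fin.ext (by simp [hg, hπ])
  have h01' : g 0 1 = 1 := Fin.ext (by simp [hg, hπ, Ne.symm h01])
  have h02' : g 0 2 = 2 := Fin.ext (by simp [hg, hπ, Ne.symm h02, Ne.symm h12])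
  apply no4_fun g h00 h01' h02'
  refine ⟨?_, ?_, ?_, ?_⟩
  · intro i j j' h
    rw [Ne, hgiff]
    exact pne_row hp h
  · intro i i' j h
    rw [Ne, hgiff]
    exact pne_col hp h
  · rintro i1 i2 j1 j2 ha hb ⟨e1, e2⟩
    rw [hgiff] at e1 e2
    exact hn4 ⟨i1, i2, j1, j2, ha, hb, e1, e2⟩
  · rintro i1 i2 i3 j1 j2 j3 a1 a2 a3 a4 a5 a6 ⟨e1, e2, e3, e4⟩
    rw [hgiff] at e1 e2 e3 e4
    exact hn6 ⟨i1, i2, i3, j1, j2, j3, a1, a2, a3, a4, a5, a6, e1, e2, e3, e4⟩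

/-- `K₃,₃` has acyclic chromatic index 5: it admits an acyclic edge coloring with 5
colors but none with 4 colors. -/
theorem k33_aci_eq_five :
    HasAEC (completeBipartiteGraph (Fin 3) (Fin 3)) 5 ∧
    ¬ HasAEC (completeBipartiteGraph (Fin 3) (Fin 3)) 4 := by
  exact ⟨exist5, not_has4⟩
end

section
/- Let f be a proper acyclic partial edge coloring of a graph G with an uncolored edge xy such that no color used on an edge incident to x is also used on an edge incident to y (i.e., F_{xy} ∩ F_{yx} = ∅). Then every candidate color for xy is valid: coloring xy with any color absent from both F_{xy} and F_{yx} yields an acyclic proper partial coloring. -/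
/-- In a cycle starting at `x` containing the edge `xy`, there is another edge
`xz` of the cycle with `z ≠ y`. -/
lemma cycle_other_edge_at_start {V : Type*} [DecidableEq V] {G : SimpleGraph V}
    {x y : V} (q : G.Walk x x) (hq : q.IsCycle) (hy : s(x, y) ∈ q.edges) :
    ∃ z, z ≠ y ∧ G.Adj x z ∧ s(x, z) ∈ q.edges := by
  cases q with
  | nil => simp at hy
  | @cons _ u _ h p =>
    have hxu : x ≠ u := h.ne
    have hxup : x ≠ u := h.ne
    have hpnodup : p.support.Nodup := by
      have := hq.support_nodup
      simpa using this
    -- decompose p.reverse : Walk x u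
    obtain ⟨t, h', r, hrev⟩ := SimpleGraph.Walk.exists_eq_cons_of_ne hxu p.reverse
    have hxt : s(x, t) ∈ p.edges := by
      have : s(x, t) ∈ p.reverse.edges := by
        rw [hrev]; simp
      rwa [SimpleGraph.Walk.edges_reverse, List.mem_reverse] at this
    have htrail := hq.isTrail.edges_nodup
    rw [SimpleGraph.Walk.edges_cons] at htrail
    have hxu_notin : s(x, u) ∉ p.edges := (List.nodup_cons.mp htrail).1
    have hut : u ≠ t := by
      rintro rfl
      exact hxu_notin hxt
    -- s(x,y) is either the first edge or the last edge
    rw [SimpleGraph.Walk.edges_cons, List.mem_cons] at hy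
    rcases hy with hy | hy
    · -- y = u, take z = t
      have : y = u := by
        rcases Sym2.eq_iff.mp hy with ⟨-, h1⟩ | ⟨h1, -⟩
        · exact h1
        · exact absurd h1 h.ne
      refine ⟨t, by rw [this]; exact fun ht => hut ht.symm, h', ?_⟩
      rw [SimpleGraph.Walk.edges_cons]
      exact List.mem_cons_of_mem _ hxt
    · -- s(x,y) ∈ p.edges, so y = t; take z = u
      have hy' : s(x, y) ∈ p.reverse.edges := by
        rw [SimpleGraph.Walk.edges_reverse, List.mem_reverse]; exact hy
      rw [hrev, SimpleGraph.Walk.edges_cons, List.mem_cons] at hy'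
      have hxr : x ∉ r.support := by
        have : p.reverse.support.Nodup := by
          rw [SimpleGraph.Walk.support_reverse]
          exact List.nodup_reverse.mpr hpnodup
        rw [hrev, SimpleGraph.Walk.support_cons, List.nodup_cons] at this
        exact this.1
      rcases hy' with hy' | hy'
      · have hyt : y = t := by
          rcases Sym2.eq_iff.mp hy' with ⟨-, h1⟩ | ⟨h1, -⟩
          · exact h1
          · exact absurd h1 h'.ne
        refine ⟨u, by rw [hyt]; exact fun hu => hut hu, h, ?_⟩
        rw [SimpleGraph.Walk.edges_cons]
        exact List.mem_cons_self
      · exact absurd (SimpleGraph.Walk.fst_mem_support_of_mem_edges r hy') hxr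

/-- If `f` is a proper acyclic partial edge coloring with uncolored edge `xy` and
`F_{xy} ∩ F_{yx} = ∅`, then every candidate color for `xy` is valid: coloring `xy`
with it keeps the partial coloring proper and acyclic. -/
theorem empty_intersection_all_candidates_valid {V : Type*} [DecidableEq V]
    (G : SimpleGraph V) (c : Sym2 V → Option ℕ) (hac : AcyclicP G c)
    (x y : V) (hxy : G.Adj x y) (huncolored : c s(x, y) = none)
    (hdisj : Fcol G c x y ∩ Fcol G c y x = ∅) :
    ∀ β : ℕ, Candidate G c x y β →
      AcyclicP G (Function.update c s(x, y) (some β)) := by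
  intro β hβ
  set c' := Function.update c s(x, y) (some β) with hc'
  have hupd_self : c' s(x, y) = some β := Function.update_self _ _ _
  have hupd_ne : ∀ e, e ≠ s(x, y) → c' e = c e := fun e he =>
    Function.update_of_ne he _ _
  have hProper : ProperP G c' := by
    intro e₁ he₁ e₂ he₂ hne ⟨v, hv1, hv2⟩ a h1 h2
    by_cases h₁ : e₁ = s(x, y) <;> by_cases h₂ : e₂ = s(x, y)
    · exact hne (h₁.trans h₂.symm)
    · -- e₁ is the new edge: a = β
      subst h₁
      rw [hupd_self] at h1
      have hβa : β = a := Option.some.inj h1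
      rw [hupd_ne _ h₂] at h2
      obtain ⟨z, rfl⟩ := Sym2.mem_iff_exists.mp hv2
      have hadj : G.Adj v z := (SimpleGraph.mem_edgeSet G).mp he₂
      rw [Sym2.mem_iff] at hv1
      rcases hv1 with rfl | rfl
      · exact hβ.1 z hadj (by rw [h2, hβa])
      · exact hβ.2 z hadj (by rw [h2, hβa])
    · subst h₂
      rw [hupd_self] at h2
      have hβa : β = a := Option.some.inj h2
      rw [hupd_ne _ h₁] at h1
      obtain ⟨z, rfl⟩ := Sym2.mem_iff_exists.mp hv1
      have hadj : G.Adj v z := (SimpleGraph.mem_edgeSet G).mp he₁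
      rw [Sym2.mem_iff] at hv2
      rcases hv2 with rfl | rfl
      · exact hβ.1 z hadj (by rw [h1, hβa])
      · exact hβ.2 z hadj (by rw [h1, hβa])
    · rw [hupd_ne _ h₁] at h1
      rw [hupd_ne _ h₂] at h2
      exact hac.1 he₁ he₂ hne ⟨v, hv1, hv2⟩ a h1 h2
  refine ⟨hProper, ?_⟩
  rintro v w hw ⟨a, b, hab, hall⟩
  by_cases hmem : s(x, y) ∈ w.edges
  · -- the cycle uses the new edge
    have key : ∀ γ : ℕ, γ ≠ β →
        (∀ e ∈ w.edges, c' e = some β ∨ c' e = some γ) → False := by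
      intro γ hγβ hβγ
      -- get the other edges at x and at y in the cycle
      have hxsupp : x ∈ w.support := SimpleGraph.Walk.fst_mem_support_of_mem_edges w hmem
      have hysupp : y ∈ w.support := SimpleGraph.Walk.snd_mem_support_of_mem_edges w hmem
      obtain ⟨z, hzy, hxz, hxz_mem⟩ :=
        cycle_other_edge_at_start (w.rotate x hxsupp) (hw.rotate hxsupp)
          ((w.rotate_edges x hxsupp).mem_iff.mpr hmem)
      obtain ⟨z', hz'x, hyz', hyz'_mem⟩ :=
        cycle_other_edge_at_start (w.rotate y hysupp) (hw.rotate hysupp)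
          ((w.rotate_edges y hysupp).mem_iff.mpr (by rwa [Sym2.eq_swap] at hmem))
      have hxz_mem' : s(x, z) ∈ w.edges := (w.rotate_edges x hxsupp).mem_iff.mp hxz_mem
      have hyz'_mem' : s(y, z') ∈ w.edges := (w.rotate_edges y hysupp).mem_iff.mp hyz'_mem
      have hxz_ne : s(x, z) ≠ s(x, y) := by
        intro h
        rcases Sym2.eq_iff.mp h with ⟨-, h1⟩ | ⟨h1, -⟩
        · exact hzy h1
        · exact hxy.ne h1
      have hyz'_ne : s(y, z') ≠ s(x, y) := by
        intro h
        rcases Sym2.eq_iff.mp h with ⟨h1, -⟩ | ⟨-, h1⟩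
        · exact hxy.ne h1.symm
        · exact hz'x h1
      have hcxz : c s(x, z) = some γ := by
        rcases hβγ _ hxz_mem' with h | h
        · rw [hupd_ne _ hxz_ne] at h
          exact absurd h (hβ.1 z hxz)
        · rwa [hupd_ne _ hxz_ne] at h
      have hcyz' : c s(y, z') = some γ := by
        rcases hβγ _ hyz'_mem' with h | h
        · rw [hupd_ne _ hyz'_ne] at h
          exact absurd h (hβ.2 z' hyz')
        · rwa [hupd_ne _ hyz'_ne] at h
      have : γ ∈ Fcol G c x y ∩ Fcol G c y x :=
        ⟨⟨z', hyz', hz'x, hcyz'⟩, ⟨z, hxz, hzy, hcxz⟩⟩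
      rw [hdisj] at this
      exact this
    rcases hall _ hmem with h | h
    · rw [hupd_self] at h
      have : β = a := Option.some.inj h
      subst this
      exact key b (Ne.symm hab) (fun e he => hall e he)
    · rw [hupd_self] at h
      have : β = b := Option.some.inj h
      subst this
      exact key a hab (fun e he => (hall e he).symm.imp id id)
  · -- the cycle avoids the new edge: contradiction with acyclicity of c
    refine hac.2 v w hw ⟨a, b, hab, fun e he => ?_⟩
    have : c' e = c e := hupd_ne e (fun h => hmem (h ▸ he))
    rw [← this]
    exact hall e he
end

section
/- Let f be a proper acyclic partial edge coloring of G with uncolored edge xy, and let β be a candidate color for xy such that for every color α ∈ F_{xy} ∩ F_{yx} there is no (α,β)-maximal bichromatic path from x to y. Then coloring xy with β yields an acyclic proper partial coloring of G. -/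
/-- An `(α,β)`-maximal bichromatic path from `x` to `y` in a partial coloring: a
nontrivial path all of whose edges are colored `α` or `β`, not extendable at either
endpoint. -/
def IsMaxBichromPathP {V : Type*} (G : SimpleGraph V) (c : Sym2 V → Option ℕ)
    (α β : ℕ) {x y : V} (w : G.Walk x y) : Prop :=
  w.IsPath ∧ w.edges ≠ [] ∧
  (∀ e ∈ w.edges, c e = some α ∨ c e = some β) ∧
  (∀ e ∈ G.edgeSet, x ∈ e → (c e = some α ∨ c e = some β) → e ∈ w.edges) ∧
  (∀ e ∈ G.edgeSet, y ∈ e → (c e = some α ∨ c e = some β) → e ∈ w.edges)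

open SimpleGraph

private lemma edge_eq_of_mem' {V : Type*} {G : SimpleGraph V} {e : Sym2 V} {u : V}
    (he : e ∈ G.edgeSet) (hu : u ∈ e) : ∃ t, G.Adj u t ∧ e = s(u, t) := by
  obtain ⟨t, rfl⟩ := Sym2.mem_iff_exists.mp hu
  exact ⟨t, G.mem_edgeSet.mp he, rfl⟩

private lemma edges_ne_nil' {V : Type*} {G : SimpleGraph V} {u v : V} (p : G.Walk u v)
    (h : u ≠ v) : p.edges ≠ [] := by
  cases p with
  | nil => exact absurd rfl h
  | cons h q => simp

private lemma first_edge_of_mem' {V : Type*} {G : SimpleGraph V} {x z : V} (p : G.Walk x z)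
    (hp : p.IsPath) {e : Sym2 V} (he : e ∈ p.edges) (hx : x ∈ e) :
    ∃ (y' : V) (h : G.Adj x y') (q : G.Walk y' z), p = SimpleGraph.Walk.cons h q ∧ e = s(x, y') := by
  cases p with
  | nil => simp at he
  | cons h q =>
    rw [Walk.edges_cons, List.mem_cons] at he
    rcases he with rfl | he
    · exact ⟨_, h, q, rfl, rfl⟩
    · obtain ⟨t, rfl⟩ := Sym2.mem_iff_exists.mp hx
      have hts := Walk.fst_mem_support_of_mem_edges q he
      rw [Walk.cons_isPath_iff] at hp
      exact absurd hts hp.2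

private lemma endpoint_edge' {V : Type*} {G : SimpleGraph V} {x y : V} (hne : x ≠ y)
    (P : G.Walk x y) (hp : P.IsPath) :
    ∃ (z : V) (h : G.Adj x z), s(x, z) ∈ P.edges ∧ ∀ e ∈ P.edges, x ∈ e → e = s(x, z) := by
  cases P with
  | nil => exact absurd rfl hne
  | cons h q =>
    refine ⟨_, h, by simp, ?_⟩
    intro e he hxe
    rw [Walk.edges_cons, List.mem_cons] at he
    rcases he with rfl | he
    · rfl
    · obtain ⟨t, rfl⟩ := Sym2.mem_iff_exists.mp hxe
      have hts := Walk.fst_mem_support_of_mem_edges q he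
      rw [Walk.cons_isPath_iff] at hp
      exact absurd hts hp.2
open SimpleGraph in
private lemma cycle_at_x' {V : Type*} [DecidableEq V] {G : SimpleGraph V}
    {c : Sym2 V → Option ℕ} (hac : AcyclicP G c) {x y : V} (hxy : G.Adj x y)
    {β : ℕ} (hcand : Candidate G c x y β) {α : ℕ}
    {w : G.Walk x x} (hw : w.IsCycle) (hmem : s(x, y) ∈ w.edges)
    (hcol : ∀ e ∈ w.edges, e ≠ s(x, y) → c e = some α ∨ c e = some β) :
    ∃ P : G.Walk x y, IsMaxBichromPathP G c α β P ∧ α ∈ Fcol G c x y ∩ Fcol G c y x := by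
  classical
  -- decompose the cycle
  cases w with
  | nil => exact absurd rfl hw.ne_nil
  | @cons _ z _ h q =>
    obtain ⟨hqpath, hqe⟩ := ((Walk.cons_isCycle_iff q h).mp hw)
    rw [Walk.edges_cons, List.mem_cons] at hmem
    -- construct the path P from x to y: the cycle minus the edge xy
    obtain ⟨P, hPpath, hPnoxy, hPsub⟩ :
        ∃ P : G.Walk x y, P.IsPath ∧ s(x, y) ∉ P.edges ∧
          ∀ e ∈ P.edges, e ∈ (Walk.cons h q).edges := by
      rcases hmem with h1 | h1
      · -- first edge of the cycle is xy
        have hz : y = z := Sym2.congr_right.mp h1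
        subst hz
        refine ⟨q.reverse, hqpath.reverse, ?_, ?_⟩
        · rw [Walk.edges_reverse, List.mem_reverse]
          exact fun hh => hqe (h1 ▸ hh)
        · intro e he
          rw [Walk.edges_reverse, List.mem_reverse] at he
          rw [Walk.edges_cons]
          exact List.mem_cons_of_mem _ he
      · -- the edge xy is inside q
        have hne1 : s(x, y) ≠ s(x, z) := fun hh => hqe (hh ▸ h1)
        obtain ⟨y', hadj', r, hqr, hey⟩ := first_edge_of_mem' q.reverse hqpath.reverse
          (by rw [Walk.edges_reverse, List.mem_reverse]; exact h1) (Sym2.mem_mk_left x y)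
        have hy' : y' = y := (Sym2.congr_right.mp hey.symm)
        subst hy'
        have hq' := hqpath.reverse
        rw [hqr, Walk.cons_isPath_iff] at hq'
        have hnodup := hqpath.reverse.edges_nodup
        rw [hqr, Walk.edges_cons, List.nodup_cons] at hnodup
        refine ⟨Walk.cons h r.reverse, ?_, ?_, ?_⟩
        · rw [Walk.cons_isPath_iff]
          refine ⟨hq'.1.reverse, ?_⟩
          rw [Walk.support_reverse, List.mem_reverse]
          exact hq'.2
        · rw [Walk.edges_cons, List.mem_cons]
          rintro (hh | hh)
          · exact hne1 hh
          · rw [Walk.edges_reverse, List.mem_reverse] at hh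
            exact hnodup.1 hh
        · intro e he
          rw [Walk.edges_cons, List.mem_cons] at he
          rcases he with rfl | he
          · rw [Walk.edges_cons]; exact List.mem_cons_self
          · rw [Walk.edges_reverse, List.mem_reverse] at he
            have : e ∈ q.reverse.edges := by
              rw [hqr, Walk.edges_cons]; exact List.mem_cons_of_mem _ he
            rw [Walk.edges_reverse, List.mem_reverse] at this
            rw [Walk.edges_cons]
            exact List.mem_cons_of_mem _ this
    -- colors of edges of P
    have hPcol : ∀ e ∈ P.edges, c e = some α ∨ c e = some β := fun e he =>
      hcol e (hPsub e he) (fun hh => hPnoxy (hh ▸ he))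
    have hPnenil : P.edges ≠ [] := edges_ne_nil' P hxy.ne
    -- first and last edges of P
    obtain ⟨z₀, h₀, hz₀mem, hz₀uniq⟩ := endpoint_edge' hxy.ne P hPpath
    obtain ⟨w₀, h₁, hw₀mem', hw₀uniq'⟩ := endpoint_edge' hxy.ne.symm P.reverse hPpath.reverse
    have hw₀mem : s(y, w₀) ∈ P.edges := by
      rw [Walk.edges_reverse, List.mem_reverse] at hw₀mem'; exact hw₀mem'
    have hw₀uniq : ∀ e ∈ P.edges, y ∈ e → e = s(y, w₀) := by
      intro e he hye
      exact hw₀uniq' e (by rw [Walk.edges_reverse, List.mem_reverse]; exact he) hye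
    have hz₀y : z₀ ≠ y := by
      rintro rfl; exact hPnoxy hz₀mem
    have hw₀x : w₀ ≠ x := by
      rintro rfl; exact hPnoxy (Sym2.eq_swap ▸ hw₀mem)
    have hcz₀ : c s(x, z₀) = some α := by
      rcases hPcol _ hz₀mem with hh | hh
      · exact hh
      · exact absurd hh (hcand.1 z₀ h₀)
    have hcw₀ : c s(y, w₀) = some α := by
      rcases hPcol _ hw₀mem with hh | hh
      · exact hh
      · exact absurd hh (hcand.2 w₀ h₁)
    refine ⟨P, ⟨hPpath, hPnenil, hPcol, ?_, ?_⟩, ⟨w₀, h₁, hw₀x, hcw₀⟩, ⟨z₀, h₀, hz₀y, hcz₀⟩⟩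
    · -- maximal at x
      intro e he hxe hce
      obtain ⟨t, hadj, rfl⟩ := edge_eq_of_mem' he hxe
      have hcα : c s(x, t) = some α := by
        rcases hce with hh | hh
        · exact hh
        · exact absurd hh (hcand.1 t hadj)
      by_cases heq : s(x, t) = s(x, z₀)
      · rw [heq]; exact hz₀mem
      · exact absurd hcα
          (hac.1 (G.mem_edgeSet.mpr h₀) (G.mem_edgeSet.mpr hadj)
            (fun hh => heq hh.symm) ⟨x, Sym2.mem_mk_left x z₀, Sym2.mem_mk_left x t⟩ α hcz₀)
    · -- maximal at y
      intro e he hye hce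
      obtain ⟨t, hadj, rfl⟩ := edge_eq_of_mem' he hye
      have hcα : c s(y, t) = some α := by
        rcases hce with hh | hh
        · exact hh
        · exact absurd hh (hcand.2 t hadj)
      by_cases heq : s(y, t) = s(y, w₀)
      · rw [heq]; exact hw₀mem
      · exact absurd hcα
          (hac.1 (G.mem_edgeSet.mpr h₁) (G.mem_edgeSet.mpr hadj)
            (fun hh => heq hh.symm) ⟨y, Sym2.mem_mk_left y w₀, Sym2.mem_mk_left y t⟩ α hcw₀)
/-- Let `β` be a candidate color for the uncolored edge `xy` of a proper acyclic
partial coloring such that for every `α ∈ F_{xy} ∩ F_{yx}` there is no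
`(α,β)`-maximal bichromatic path from `x` to `y`. Then coloring `xy` with `β`
yields an acyclic proper partial coloring. -/
theorem no_critical_path_implies_valid {V : Type*} [DecidableEq V]
    (G : SimpleGraph V) (c : Sym2 V → Option ℕ) (hac : AcyclicP G c)
    (x y : V) (hxy : G.Adj x y) (huncolored : c s(x, y) = none)
    (β : ℕ) (hcand : Candidate G c x y β)
    (hnopath : ∀ α ∈ Fcol G c x y ∩ Fcol G c y x,
      ¬ ∃ w : G.Walk x y, IsMaxBichromPathP G c α β w) :
    AcyclicP G (Function.update c s(x, y) (some β)) := by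
  classical
  constructor
  · -- properness
    intro e₁ h1 e₂ h2 hne hsh a ha1 ha2
    by_cases he₁ : e₁ = s(x, y) <;> by_cases he₂ : e₂ = s(x, y)
    · exact hne (he₁.trans he₂.symm)
    · subst he₁
      rw [Function.update_self] at ha1
      rw [Function.update_of_ne he₂] at ha2
      obtain ⟨u, hu1, hu2⟩ := hsh
      obtain ⟨t, hadj, rfl⟩ := edge_eq_of_mem' h2 hu2
      cases ha1
      rcases Sym2.mem_iff.mp hu1 with rfl | rfl
      · exact hcand.1 t hadj ha2
      · exact hcand.2 t hadj ha2
    · subst he₂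
      rw [Function.update_self] at ha2
      rw [Function.update_of_ne he₁] at ha1
      obtain ⟨u, hu1, hu2⟩ := hsh
      obtain ⟨t, hadj, rfl⟩ := edge_eq_of_mem' h1 hu1
      cases ha2
      rcases Sym2.mem_iff.mp hu2 with rfl | rfl
      · exact hcand.1 t hadj ha1
      · exact hcand.2 t hadj ha1
    · rw [Function.update_of_ne he₁] at ha1
      rw [Function.update_of_ne he₂] at ha2
      exact hac.1 h1 h2 hne hsh a ha1 ha2
  · -- acyclicity
    rintro v w hw ⟨a, b, hab, hcol⟩
    by_cases hm : s(x, y) ∈ w.edges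
    · -- the cycle uses the new edge
      have hβ : β = a ∨ β = b := by
        have := hcol _ hm
        rw [Function.update_self] at this
        rcases this with hh | hh
        · exact Or.inl (Option.some.inj hh)
        · exact Or.inr (Option.some.inj hh)
      -- x is on the cycle: rotate it to be based at x
      have hx : x ∈ w.support := SimpleGraph.Walk.fst_mem_support_of_mem_edges w hm
      have hw₂ : (w.rotate x hx).IsCycle := hw.rotate hx
      have hiff : ∀ e : Sym2 V, e ∈ (w.rotate x hx).edges ↔ e ∈ w.edges :=
        fun e => (w.rotate_edges x hx).mem_iff
      have hmem₂ : s(x, y) ∈ (w.rotate x hx).edges := (hiff _).mpr hm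
      rcases hβ with rfl | rfl
      · -- β = a, so α = b
        have hcol' : ∀ e ∈ (w.rotate x hx).edges, e ≠ s(x, y) →
            c e = some b ∨ c e = some β := by
          intro e he hne
          have := hcol e ((hiff e).mp he)
          rw [Function.update_of_ne hne] at this
          exact this.symm
        obtain ⟨P, hP, hα⟩ := cycle_at_x' hac hxy hcand hw₂ hmem₂ hcol'
        exact hnopath b hα ⟨P, hP⟩
      · -- β = b, so α = a
        have hcol' : ∀ e ∈ (w.rotate x hx).edges, e ≠ s(x, y) →
            c e = some a ∨ c e = some β := by
          intro e he hne
          have := hcol e ((hiff e).mp he)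
          rw [Function.update_of_ne hne] at this
          exact this
        obtain ⟨P, hP, hα⟩ := cycle_at_x' hac hxy hcand hw₂ hmem₂ hcol'
        exact hnopath a hα ⟨P, hP⟩
    · -- the cycle avoids the new edge: contradicts acyclicity of c
      refine hac.2 v w hw ⟨a, b, hab, fun e he => ?_⟩
      have hne : e ≠ s(x, y) := fun hh => hm (hh ▸ he)
      rw [← Function.update_of_ne hne (some β) c]
      exact hcol e he
end
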